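/- arXiv:1404.2919 — 5 statements merged into one kernel-verified Lean document; each statement's English description precedes it below -/
import Mathlib

section
/- For every infinite cardinal λ and every infinite cardinal μ ≤ λ, there exists a family F of functions from λ to μ with |F| = 2^λ which is independent: for any finitely many pairwise distinct f₁, …, fₙ ∈ F and any values ε₁, …, εₙ < μ, there exists t < λ such that fᵢ(t) = εᵢ for all i ≤ n. -/
open Cardinal

/-- Engelking–Karłowicz: for infinite cardinals `#β ≤ #α` there is an independent
family of `2 ^ #α` functions from `α` to `β`. -/
theorem stmt_0 (α β : Type u) [Infinite α] [Infinite β] (h : #β ≤ #α) :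
    ∃ F : Set (α → β), #F = 2 ^ #α ∧
      ∀ s : Finset (α → β), ↑s ⊆ F → ∀ e : (α → β) → β,
        ∃ t : α, ∀ f ∈ s, f t = e f := by
  classical
  obtain ⟨b₀, b₁, hb⟩ := exists_pair_ne β
  let I := Σ s : Finset α, (Set {x // x ∈ s} → β)
  have hcard : #I = #α := by
    apply le_antisymm
    · have h1 : #I = Cardinal.sum fun s : Finset α => #(Set {x // x ∈ s} → β) :=
        Cardinal.mk_sigma _
      rw [h1]
      calc Cardinal.sum (fun s : Finset α => #(Set {x // x ∈ s} → β))
          ≤ Cardinal.sum (fun _ : Finset α => #β) := by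
            apply Cardinal.sum_le_sum
            intro s
            rw [← Cardinal.power_def]
            exact Cardinal.pow_le (Cardinal.aleph0_le_mk β) (lt_aleph0_of_finite _)
        _ = #(Finset α) * #β := Cardinal.sum_const' _ _
        _ = #α * #β := by rw [Cardinal.mk_finset_of_infinite]
        _ ≤ #α * #α := mul_le_mul_right h _
        _ = #α := Cardinal.mul_eq_self (Cardinal.aleph0_le_mk α)
    · exact Cardinal.mk_le_of_injective (f := fun a : α => (⟨{a}, fun _ => b₀⟩ : I))
        (by intro a b hab; simpa using congrArg Sigma.fst hab)
  obtain ⟨e⟩ := Cardinal.eq.mp hcard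
  let G : Set α → α → β := fun X a => (e.symm a).2 {x | (x : α) ∈ X}
  have hG : ∀ (X : Set α) (p : I), G X (e p) = p.2 {x | (x : α) ∈ X} := by
    intro X p; rw [show G X (e p) = (e.symm (e p)).snd {x | (x : α) ∈ X} from rfl, Equiv.symm_apply_apply]
  have hGinj : Function.Injective G := by
    intro X Y hXY
    by_contra hne
    obtain ⟨p, hp⟩ := Set.symmDiff_nonempty.mpr hne
    let τ : Set {x // x ∈ ({p} : Finset α)} → β :=
      fun t => if (⟨p, Finset.mem_singleton_self p⟩ : {x // x ∈ ({p} : Finset α)}) ∈ t then b₀ else b₁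
    have h2 := congrFun hXY (e ⟨{p}, τ⟩)
    rw [hG, hG] at h2
    rcases Set.mem_symmDiff.mp hp with ⟨hX, hY⟩ | ⟨hY, hX⟩
    · simp only [τ, Set.mem_setOf_eq, if_pos hX, if_neg hY] at h2
      exact hb h2
    · simp only [τ, Set.mem_setOf_eq, if_neg hX, if_pos hY] at h2
      exact hb h2.symm
  refine ⟨Set.range G, ?_, ?_⟩
  · rw [Cardinal.mk_range_eq _ hGinj, Cardinal.mk_set]
  · intro s hs ev
    have hX : ∀ f ∈ s, ∃ X, G X = f := fun f hf => hs hf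
    let X : (α → β) → Set α := fun f => if h : ∃ X, G X = f then h.choose else ∅
    have hGX : ∀ f ∈ s, G (X f) = f := by
      intro f hf
      simp only [X]
      rw [dif_pos (hX f hf)]
      exact (hX f hf).choose_spec
    let sep : (α → β) → (α → β) → α :=
      fun f g => if h : (symmDiff (X f) (X g)).Nonempty then h.choose else Classical.arbitrary α
    let s' : Finset α := s.biUnion fun f => s.image (sep f)
    have hsep : ∀ f ∈ s, ∀ g ∈ s, f ≠ g → ∃ p ∈ s', ¬((p ∈ X f) ↔ (p ∈ X g)) := by
      intro f hf g hg hfg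
      have hne : X f ≠ X g := by
        intro hEq
        apply hfg
        rw [← hGX f hf, ← hGX g hg, hEq]
      have hnon : (symmDiff (X f) (X g)).Nonempty := Set.symmDiff_nonempty.mpr hne
      refine ⟨sep f g, ?_, ?_⟩
      · exact Finset.mem_biUnion.mpr ⟨f, hf, Finset.mem_image.mpr ⟨g, hg, rfl⟩⟩
      · have hmem : sep f g ∈ symmDiff (X f) (X g) := by
          simp only [sep, dif_pos hnon]
          exact hnon.choose_spec
        rcases Set.mem_symmDiff.mp hmem with ⟨h1, h2⟩ | ⟨h1, h2⟩
        · intro hiff; exact h2 (hiff.mp h1)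
        · intro hiff; exact h2 (hiff.mpr h1)
    let r : Set α → Set {x // x ∈ s'} := fun Y => {x | (x : α) ∈ Y}
    have hrinj : ∀ f ∈ s, ∀ g ∈ s, r (X f) = r (X g) → f = g := by
      intro f hf g hg hr
      by_contra hfg
      obtain ⟨p, hps', hp⟩ := hsep f hf g hg hfg
      apply hp
      constructor
      · intro hpf
        have : (⟨p, hps'⟩ : {x // x ∈ s'}) ∈ r (X f) := hpf
        rw [hr] at this; exact this
      · intro hpg
        have : (⟨p, hps'⟩ : {x // x ∈ s'}) ∈ r (X g) := hpg
        rw [← hr] at this; exact this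
    let τ : Set {x // x ∈ s'} → β :=
      fun t => if h : ∃ f, f ∈ s ∧ r (X f) = t then ev h.choose else b₀
    have hτ : ∀ f ∈ s, τ (r (X f)) = ev f := by
      intro f hf
      have hex : ∃ g, g ∈ s ∧ r (X g) = r (X f) := ⟨f, hf, rfl⟩
      simp only [τ]
      rw [dif_pos hex]
      obtain ⟨hg, hgr⟩ := hex.choose_spec
      rw [hrinj _ hg _ hf hgr]
    refine ⟨e ⟨s', τ⟩, ?_⟩
    intro f hf
    conv_lhs => rw [← hGX f hf]
    rw [hG]
    exact hτ f hf
end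

section
/- Let D be an ultrafilter on a set I, M a structure, N = M^I/D, and p = {φ_i(x, a_i) : i < λ} a partial type over N with a fixed lifting a_i ↦ (a_i[t])_{t∈I}. Suppose there exists a multiplicative monotonic map d : [λ]^{<ℵ₀} → D such that (a) d(u) ⊆ { t ∈ I : M ⊨ ∃x ⋀_{i ∈ u} φ_i(x, a_i[t]) } for every finite u, and (b) the image of d on singletons is regularizing, i.e. for every t ∈ I the set {i < λ : t ∈ d({i})} is finite. Then p is realized in N. -/
open FirstOrder Filter

theorem aux_mem_d {κ : Type*} [DecidableEq κ] {I : Type*} (d : Finset κ → Set I)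
    (hmult : ∀ u v : Finset κ, d u ∩ d v = d (u ∪ v)) {t : I} :
    ∀ u : Finset κ, u.Nonempty → (∀ i ∈ u, t ∈ d {i}) → t ∈ d u := by
  intro u hu
  induction hu using Finset.Nonempty.cons_induction with
  | singleton i => intro h; exact h i (Finset.mem_singleton_self i)
  | cons i u hi hu ih =>
    intro h
    have h1 : t ∈ d {i} := h i (Finset.mem_cons_self i u)
    have h2 : t ∈ d u := ih fun j hj => h j (Finset.mem_cons_of_mem hj)
    have : t ∈ d {i} ∩ d u := ⟨h1, h2⟩
    rw [hmult] at this
    have hcons : ({i} ∪ u : Finset κ) = Finset.cons i u hi := by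
      ext j; simp [Finset.mem_cons, or_comm]
    rwa [hcons] at this

/-- If a partial type `{φ_i(x, a_i) : i}` over the ultrapower `M^I/D` admits a
multiplicative monotonic distribution `d` into `D` which refines the Łoś map and whose
image on singletons is regularizing, then the type is realized in the ultrapower. -/
theorem stmt_5 {L : FirstOrder.Language} {I : Type*} (D : Ultrafilter I)
    (M : Type*) [L.Structure M] [Nonempty M] {κ : Type*} [DecidableEq κ]
    (φ : κ → L.Formula (Fin 2)) (a : κ → I → M)
    (d : Finset κ → Set I)
    (hdD : ∀ u, d u ∈ D)
    (hmono : ∀ u v : Finset κ, u ⊆ v → d v ⊆ d u)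
    (hmult : ∀ u v : Finset κ, d u ∩ d v = d (u ∪ v))
    (ha : ∀ u : Finset κ,
      d u ⊆ { t : I | ∃ b : M, ∀ i ∈ u, (φ i).Realize ![b, a i t] })
    (hreg : ∀ t : I, { i : κ | t ∈ d {i} }.Finite) :
    ∃ b : (D : Filter I).Product (fun _ : I => M),
      ∀ i : κ, (φ i).Realize
        ![b, (↑(a i) : (D : Filter I).Product (fun _ : I => M))] := by
  classical
  -- the finite set of indices "active" at t
  set u : I → Finset κ := fun t => (hreg t).toFinset with hu
  have key : ∀ t : I, ∃ b : M, ∀ i ∈ u t, (φ i).Realize ![b, a i t] := by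
    intro t
    rcases Finset.eq_empty_or_nonempty (u t) with h | h
    · exact ⟨Classical.arbitrary M, by simp [h]⟩
    · have ht : t ∈ d (u t) := by
        apply aux_mem_d d hmult (u t) h
        intro i hi
        simpa [hu] using hi
      exact ha (u t) ht
  choose B hB using key
  refine ⟨(↑B : (D : Filter I).Product (fun _ : I => M)), fun i => ?_⟩
  have hcast := Language.Ultraproduct.boundedFormula_realize_cast (u := D)
      (M := fun _ : I => M) (φ i) ![B, a i] default
  have heq : (fun j : Fin 2 => (@Quotient.mk' _ ((D : Filter I).productSetoid fun _ : I => M) (![B, a i] j) :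
      (D : Filter I).Product (fun _ : I => M))) =
      ![@Quotient.mk' _ ((D : Filter I).productSetoid fun _ : I => M) B, @Quotient.mk' _ ((D : Filter I).productSetoid fun _ : I => M) (a i)] := by
    funext j; fin_cases j <;> rfl
  rw [heq] at hcast
  have hv : (fun j : Fin 0 => (@Quotient.mk' _
      ((D : Filter I).productSetoid fun _ : I => M)
      ((default : Fin 0 → ∀ _ : I, M) j))) =
      (default : Fin 0 → (D : Filter I).Product (fun _ : I => M)) :=
    funext fun j => j.elim0
  rw [hv] at hcast
  refine hcast.mpr ?_
  filter_upwards [hdD {i}] with t ht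
  have hi : i ∈ u t := by simpa [hu] using ht
  have hBt := hB t i hi
  rw [Language.Formula.Realize] at hBt
  have h2 : (fun j : Fin 2 => ![B, a i] j t) = ![B t, a i t] := by
    funext j; fin_cases j <;> rfl
  have h3 : (fun j : Fin 0 => (default : Fin 0 → ∀ _ : I, M) j t) =
      (default : Fin 0 → M) := funext fun j => j.elim0
  rw [h2, h3]
  exact hBt
end

section
/- Let D be a regular ultrafilter on λ and let M, N be elementarily equivalent structures in a countable language. Then M^λ/D is λ⁺-saturated if and only if N^λ/D is λ⁺-saturated. -/
/-! Let `p` be a finitely satisfiable type over at most `λ` parameters of `N^λ/D`. Regularity of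
`D` yields finite sets `Φ t` of formulas such that each `φ ∈ p` lies in `Φ t` for `D`-almost all
`t`. As `Φ t` is finite and `M ≡ N`, one sentence transfers to `M` the pattern of which subsets
of `Φ t` are satisfiable over the `t`-th coordinates of the parameters, so these coordinates can
be replaced by elements of `M` with the same pattern. By Łoś the transferred type is finitely
satisfiable in `M^λ/D`, hence realized there, and the same coordinatewise transfer carries a
realization back to `N^λ/D`. -/

open FirstOrder Filter Cardinal

universe u

/-- `M` realizes all types (in one free variable) over parameter sets of
cardinality at most `lam`, i.e. `M` is `lam⁺`-saturated. -/
def realizesTypesLE (L : FirstOrder.Language.{u, u}) (M : Type u) [L.Structure M]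
    (lam : Cardinal.{u}) : Prop :=
  ∀ A : Set M, #A ≤ lam →
    ∀ p : Set (L.Formula (↥A ⊕ Fin 1)),
      (∀ s : Finset (L.Formula (↥A ⊕ Fin 1)), ↑s ⊆ p →
        ∃ x : M, ∀ φ ∈ s, φ.Realize (Sum.elim Subtype.val fun _ => x)) →
      ∃ x : M, ∀ φ ∈ p, φ.Realize (Sum.elim Subtype.val fun _ => x)

theorem Filter.exists_finset_eventually_mem {α σ : Type u} {f : Filter α}
    (hreg : ∃ X : α → Set α, (∀ i, X i ∈ f) ∧ ∀ s : Set α, s.Infinite → ⋂ i ∈ s, X i = ∅)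
    {p : Set σ} (hp : #p ≤ #α) : ∃ Φ : α → Finset σ, ∀ φ ∈ p, ∀ᶠ t in f, φ ∈ Φ t := by
  classical
  obtain ⟨X, hXf, hXinter⟩ := hreg
  obtain ⟨g⟩ := (Cardinal.le_def _ _).1 hp
  have hfin : ∀ t, {i | t ∈ X i}.Finite := fun t => by
    by_contra hinf
    have ht : t ∈ ⋂ i ∈ {i | t ∈ X i}, X i := Set.mem_iInter₂.2 fun _ hi => hi
    rwa [hXinter _ hinf] at ht
  refine ⟨fun t => ((hfin t).preimage g.injective.injOn).toFinset.image Subtype.val,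
    fun φ hφ => ?_⟩
  filter_upwards [hXf (g ⟨φ, hφ⟩)] with t ht
  simpa [hφ] using ht

namespace FirstOrder.Language

variable {L : Language.{u, u}}

theorem card_formula_le {β : Type u} {κ : Cardinal.{u}} (hκ : ℵ₀ ≤ κ) (hL : L.card ≤ κ)
    (hβ : #β ≤ κ) : #(L.Formula β) ≤ κ := by
  refine (mk_le_of_injective (f := fun φ => (⟨0, φ⟩ : Σ n, L.BoundedFormula β n))
    fun _ _ h => by simpa using h).trans (BoundedFormula.card_le.trans ?_)
  simpa only [lift_id] using max_le hκ (add_le_of_le hκ hβ hL)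

section Realizable

variable {β : Type u}

def Realizable {P : Type u} [L.Structure P] (v : β → P) (p : Set (L.Formula (β ⊕ Fin 1))) :
    Prop :=
  ∃ x : P, ∀ φ ∈ p, φ.Realize (Sum.elim v fun _ => x)

noncomputable def realizableFormula (s : Finset (L.Formula (β ⊕ Fin 1))) : L.Formula β :=
  Formula.iExs (Fin 1) (Formula.iInf fun φ : s => φ.1)

theorem realize_realizableFormula {P : Type u} [L.Structure P]
    (s : Finset (L.Formula (β ⊕ Fin 1))) (v : β → P) :
    (realizableFormula s).Realize v ↔ Realizable v (↑s : Set (L.Formula _)) := by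
  have elim_const : ∀ y : Fin 1 → P, Sum.elim v y = Sum.elim v fun _ => y 0 := fun y =>
    congrArg (Sum.elim v) (funext fun j => congrArg y (Subsingleton.elim j 0))
  simp only [realizableFormula, Formula.realize_iExs, Formula.realize_iInf, Subtype.forall,
    Finset.mem_coe, Realizable]
  exact ⟨fun ⟨y, hy⟩ => ⟨y 0, elim_const y ▸ hy⟩, fun ⟨x, hx⟩ => ⟨fun _ => x, hx⟩⟩

end Realizable

namespace ElementarilyEquivalent

variable {M N : Type u} [L.Structure M] [L.Structure N]

theorem exists_realize_formula [Nonempty M] (h : M ≅[L] N) {γ : Type u} (φ : L.Formula γ)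
    (hN : ∃ v : γ → N, φ.Realize v) : ∃ v : γ → M, φ.Realize v := by
  classical
  -- `φ` may have infinitely many variables; quantify over the finitely many free ones only.
  let σ : L.Sentence := Formula.iExs φ.freeVarFinset (φ.restrictFreeVar Sum.inr)
  have hNσ : N ⊨ σ := by
    obtain ⟨v, hv⟩ := hN
    exact Formula.realize_iExs.2 ⟨v ∘ Subtype.val,
      (BoundedFormula.realize_restrictFreeVar (f := Sum.inr) v fun _ => rfl).2 hv⟩
  obtain ⟨i, hi⟩ := Formula.realize_iExs.1 ((h.realize_sentence σ).2 hNσ)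
  refine ⟨fun a => if ha : a ∈ φ.freeVarFinset then i ⟨a, ha⟩ else Classical.arbitrary M,
    (BoundedFormula.realize_restrictFreeVar _ fun a => ?_).1 hi⟩
  simp [a.2]

theorem exists_realize_iff_of_finset [Nonempty M] (h : M ≅[L] N) {γ : Type u}
    (Ψ : Finset (L.Formula γ)) (v : γ → N) :
    ∃ w : γ → M, ∀ ψ ∈ Ψ, ψ.Realize w ↔ ψ.Realize v := by
  classical
  let χ : L.Formula γ := Formula.iInf fun ψ : Ψ => if ψ.1.Realize v then ψ.1 else ∼ψ.1
  have hχ : χ.Realize v := Formula.realize_iInf.2 fun ψ => by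
    split_ifs with hψ
    · exact hψ
    · exact Formula.realize_not.2 hψ
  obtain ⟨w, hw⟩ := h.exists_realize_formula χ ⟨v, hχ⟩
  refine ⟨w, fun ψ hψ => ?_⟩
  have hwψ := Formula.realize_iInf.1 hw ⟨ψ, hψ⟩
  by_cases hvψ : ψ.Realize v
  · exact iff_of_true (by simpa [hvψ] using hwψ) hvψ
  · exact iff_of_false (by simpa [hvψ] using hwψ) hvψ

theorem exists_realizable_iff [Nonempty M] (h : M ≅[L] N) {β : Type u}
    (Φ : Finset (L.Formula (β ⊕ Fin 1))) (v : β → N) :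
    ∃ w : β → M, ∀ s ⊆ Φ,
      Realizable w (↑s : Set (L.Formula _)) ↔ Realizable v (↑s : Set (L.Formula _)) := by
  classical
  obtain ⟨w, hw⟩ := h.exists_realize_iff_of_finset (Φ.powerset.image realizableFormula) v
  refine ⟨w, fun s hs => ?_⟩
  rw [← realize_realizableFormula, ← realize_realizableFormula]
  exact hw _ (Finset.mem_image_of_mem _ (Finset.mem_powerset.2 hs))

end ElementarilyEquivalent

namespace Ultraproduct

variable {α β : Type u} {u : Ultrafilter α} {M N : α → Type u} [∀ t, L.Structure (M t)]
  [∀ t, L.Structure (N t)] [∀ t, Nonempty (M t)] [∀ t, Nonempty (N t)]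

theorem realize_sumElim_cast (φ : L.Formula (β ⊕ Fin 1)) (v : β → ∀ t, M t) (x : ∀ t, M t) :
    φ.Realize (Sum.elim (fun b => (v b : (u : Filter α).Product M))
        fun _ => (x : (u : Filter α).Product M)) ↔
      ∀ᶠ t in (u : Filter α), φ.Realize (Sum.elim (fun b => v b t) fun _ => x t) := by
  convert realize_formula_cast (u := u) φ (Sum.elim v fun _ => x) using 3 with i t
  · cases i <;> rfl
  · exact iff_of_eq (congrArg _ (funext fun i => by cases i <;> rfl))

theorem realizable_cast_of_eventually_mem {Φ : α → Finset (L.Formula (β ⊕ Fin 1))}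
    {v : β → ∀ t, M t} {w : β → ∀ t, N t}
    (hvw : ∀ t, ∀ s ⊆ Φ t, Realizable (fun b => v b t) (↑s : Set (L.Formula _)) →
      Realizable (fun b => w b t) (↑s : Set (L.Formula _)))
    {p : Set (L.Formula (β ⊕ Fin 1))} (hΦ : ∀ φ ∈ p, ∀ᶠ t in (u : Filter α), φ ∈ Φ t)
    (hp : Realizable (fun b => (v b : (u : Filter α).Product M)) p) :
    Realizable (fun b => (w b : (u : Filter α).Product N)) p := by
  classical
  obtain ⟨x, hx⟩ := hp
  obtain ⟨x, rfl⟩ : ∃ f : ∀ t, M t, (f : (u : Filter α).Product M) = x := Quotient.exists_rep x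
  let realizedAt t := (Φ t).filter fun φ => φ.Realize (Sum.elim (fun b => v b t) fun _ => x t)
  choose y hy using fun t => hvw t (realizedAt t) (Finset.filter_subset _ _)
    ⟨x t, fun φ hφ => (Finset.mem_filter.1 hφ).2⟩
  refine ⟨(y : (u : Filter α).Product N), fun φ hφ => (realize_sumElim_cast φ w y).2 ?_⟩
  filter_upwards [hΦ φ hφ, (realize_sumElim_cast φ v x).1 (hx φ hφ)] with t hmem hreal
  exact hy t φ (Finset.mem_filter.2 ⟨hmem, hreal⟩)

end Ultraproduct

end FirstOrder.Language

open FirstOrder.Language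

theorem realizesTypesLE.realizable {L : FirstOrder.Language.{u, u}} {P : Type u} [L.Structure P]
    {κ : Cardinal.{u}} (hP : realizesTypesLE L P κ) {β : Type u} (hβ : #β ≤ κ) (v : β → P)
    (p : Set (L.Formula (β ⊕ Fin 1)))
    (hp : ∀ s : Finset (L.Formula (β ⊕ Fin 1)), ↑s ⊆ p → Realizable v (↑s : Set (L.Formula _))) :
    Realizable v p := by
  let f : β → Set.range v := Set.rangeFactorization v
  have realize_relabel : ∀ x : P, ∀ φ : L.Formula (β ⊕ Fin 1),
      (φ.relabel (Sum.map f id)).Realize (Sum.elim Subtype.val fun _ => x) ↔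
        φ.Realize (Sum.elim v fun _ => x) := fun x φ => by
    rw [Formula.realize_relabel]
    exact iff_of_eq (congrArg _ (funext fun i => by cases i <;> rfl))
  obtain ⟨x, hx⟩ := hP (Set.range v) (mk_range_le.trans hβ)
    ((fun φ => φ.relabel (Sum.map f id)) '' p) fun s hs => by
      classical
      obtain ⟨s, hsp, rfl⟩ := Finset.subset_set_image_iff.1 hs
      obtain ⟨x, hx⟩ := hp s hsp
      exact ⟨x, by simpa [realize_relabel] using hx⟩
  exact ⟨x, fun φ hφ => (realize_relabel x φ).1 (hx _ ⟨φ, hφ, rfl⟩)⟩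

theorem realizesTypesLE_ultraproduct_of_elementarilyEquivalent {L : FirstOrder.Language.{u, u}}
    (hL : L.card ≤ ℵ₀) {α : Type u} [Infinite α] {D : Ultrafilter α}
    (hreg : ∃ X : α → Set α, (∀ i, X i ∈ D) ∧ ∀ s : Set α, s.Infinite → ⋂ i ∈ s, X i = ∅)
    {M N : Type u} [L.Structure M] [L.Structure N] [Nonempty M] [Nonempty N] (heq : M ≅[L] N)
    (hM : realizesTypesLE L ((D : Filter α).Product fun _ => M) #α) :
    realizesTypesLE L ((D : Filter α).Product fun _ => N) #α := by
  intro A hA p hp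
  choose v hv using fun a : A =>
    (Quotient.exists_rep a.1 : ∃ f : α → N, (f : (D : Filter α).Product fun _ => N) = a.1)
  have hval : (Subtype.val : A → _) = fun a => (v a : (D : Filter α).Product fun _ => N) :=
    funext fun a => (hv a).symm
  rw [hval] at hp ⊢
  have hα : ℵ₀ ≤ #α := aleph0_le_mk α
  have hpα : #p ≤ #α := (mk_set_le p).trans <| card_formula_le hα (hL.trans hα) <| by
    simpa using add_le_of_le hα hA (one_le_aleph0.trans hα)
  obtain ⟨Φ, hΦ⟩ := Filter.exists_finset_eventually_mem hreg hpα
  choose w hw using fun t => heq.exists_realizable_iff (Φ t) fun a => v a t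
  have hMp : Realizable (fun a => ((fun t => w t a) : (D : Filter α).Product fun _ => M)) p :=
    hM.realizable hA _ p fun s hs => Ultraproduct.realizable_cast_of_eventually_mem
      (fun t s' hs' => (hw t s' hs').2) (fun φ hφ => hΦ φ (hs hφ)) (hp s hs)
  exact Ultraproduct.realizable_cast_of_eventually_mem (fun t s hs => (hw t s hs).1) hΦ hMp

/-- Keisler: for a regular ultrafilter `D` on `α` and elementarily equivalent
structures `M`, `N` in a countable language, `M^α/D` is `#α⁺`-saturated iff
`N^α/D` is. -/
theorem stmt_6 {L : FirstOrder.Language.{u, u}} (hL : L.card ≤ ℵ₀)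
    {α : Type u} [Infinite α] (D : Ultrafilter α)
    (hreg : ∃ X : α → Set α, (∀ i, X i ∈ D) ∧
      ∀ s : Set α, s.Infinite → ⋂ i ∈ s, X i = ∅)
    (M N : Type u) [L.Structure M] [L.Structure N] [Nonempty M] [Nonempty N]
    (heq : M ≅[L] N) :
    realizesTypesLE L ((D : Filter α).Product fun _ => M) #α ↔
      realizesTypesLE L ((D : Filter α).Product fun _ => N) #α :=
  ⟨realizesTypesLE_ultraproduct_of_elementarilyEquivalent hL hreg heq,
    realizesTypesLE_ultraproduct_of_elementarilyEquivalent hL hreg heq.symm⟩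
end

section
/- Let σ ≤ μ be infinite cardinals with σ regular and μ^{<σ} = μ. Then there exists an array ⟨u^α_ε : ε < μ, α < μ⁺⟩ such that: (1) each u^α_ε ∈ [α]^{<σ}; (2) if β ∈ u^α_ε then u^β_ε = u^α_ε ∩ β; and (3) for every u ∈ [μ⁺]^{<σ} there is ε < μ such that for every β ∈ u, u ∩ β ⊆ u^β_ε. -/
/-!
Fix injections `f β : β → μ` for `β < μ⁺` and upgrade them to injections `F β : β → μ × 2` that
are moreover fresh: `F β γ` is never a value of `F γ`. A set `u ∈ [μ⁺]^{<σ}` with increasing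
enumeration `⟨e i : i < δ⟩` is coded by `δ` and the matrix `⟨F (e i) (e j) : j < i < δ⟩`; since
`μ^{<σ} = μ` there are at most `μ` codes, enumerated by `ε < μ`.

Given a code, `u^α_ε` is defined by recursion on `α`: take the largest position `i` at which `α`
fits, i.e. the entries of row `i` are values of `F α` at increasing points `b j < α`, each of which
already has `u^{b j}_ε = {b k | k < j}`, and put `u^α_ε = {b j | j < i}`. Coherence is built into
the recursion. For the code of `u`, injectivity of `F (e i)` recovers `e j` from the entries, so
`e i` fits at position `i`, and freshness excludes every later position `i'`, which would make
`F (e i') (e i)` a value of `F (e i)`.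
-/

open Cardinal Set

universe u v w

lemma StrictMonoOn.image_Iio_inter_Iio {α β : Type*} [LinearOrder α] [Preorder β] {f : α → β}
    {i j : α} (hf : StrictMonoOn f (Iio i)) (hj : j < i) : f '' Iio i ∩ Iio (f j) = f '' Iio j := by
  ext x
  constructor
  · rintro ⟨⟨k, hk, rfl⟩, hkj⟩
    exact ⟨k, (hf.lt_iff_lt hk hj).1 hkj, rfl⟩
  · rintro ⟨k, hk, rfl⟩
    exact ⟨⟨k, lt_trans hk hj, rfl⟩, hf (lt_trans hk hj) hj hk⟩

lemma Ordinal.exists_strictMono_image_Iio_eq {s : Set Ordinal.{u}} (hs : BddAbove s) :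
    ∃ e : Ordinal.{u} → Ordinal.{u}, StrictMono e ∧ ∃ δ, e '' Iio δ = s := by
  obtain ⟨b, hb⟩ := hs
  -- adjoining a final segment makes the set unbounded, so that `enumOrd` enumerates it
  have hunb : ¬ BddAbove (s ∪ Ici (Order.succ b)) := fun h ↦
    not_bddAbove_Ici (Order.succ b) (h.mono subset_union_right)
  have he := Ordinal.enumOrd_strictMono hunb
  obtain ⟨δ, hδ⟩ := Ordinal.enumOrd_surjective hunb (mem_union_right s (mem_Ici.2 le_rfl))
  refine ⟨_, he, δ, Subset.antisymm ?_ fun x hx ↦ ?_⟩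
  · rintro _ ⟨j, hj, rfl⟩
    refine (Ordinal.enumOrd_mem hunb j).resolve_right fun h ↦ (he hj).not_ge ?_
    rw [hδ]
    exact h
  · obtain ⟨j, rfl⟩ := Ordinal.enumOrd_surjective hunb (mem_union_left _ hx)
    refine ⟨j, he.lt_iff_lt.1 ?_, rfl⟩
    rw [hδ]
    exact Order.lt_succ_of_le (hb hx)

lemma Set.exists_surjOn_univ_of_lift_mk_le {α : Type v} {β : Type w} [Nonempty α] {T : Set β}
    (h : lift.{w} #α ≤ lift.{v} #T) : ∃ d : β → α, SurjOn d T univ := by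
  obtain ⟨g⟩ := lift_mk_le'.1 h
  have hg : Function.Injective fun a ↦ (g a : β) := Subtype.val_injective.comp g.injective
  exact ⟨Function.invFun fun a ↦ (g a : β), fun a _ ↦
    ⟨g a, (g a).2, Function.leftInverse_invFun hg a⟩⟩

namespace CoherentArray

open Classical

variable {M : Type*}

-- The tag is flipped when `(e β γ, false)` is already a value of `freshen e γ`; as `e γ` is
-- injective, the two tags of `e β γ` cannot both be taken.
noncomputable def freshen (e : Ordinal.{u} → Ordinal.{u} → M) :
    Ordinal.{u} → Ordinal.{u} → M × Bool :=
  Ordinal.lt_wf.fix fun β F γ =>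
    if h : γ < β then (e β γ, decide ((e β γ, false) ∈ F γ h '' Iio γ)) else (e β γ, false)

lemma freshen_apply (e : Ordinal.{u} → Ordinal.{u} → M) {β γ : Ordinal.{u}} (h : γ < β) :
    freshen e β γ = (e β γ, decide ((e β γ, false) ∈ freshen e γ '' Iio γ)) := by
  rw [freshen, Ordinal.lt_wf.fix_eq, dif_pos h]

lemma injOn_freshen {e : Ordinal.{u} → Ordinal.{u} → M} {β : Ordinal.{u}}
    (he : InjOn (e β) (Iio β)) : InjOn (freshen e β) (Iio β) := fun γ hγ γ' hγ' h ↦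
  he hγ hγ' <| by simpa [freshen_apply e hγ, freshen_apply e hγ'] using congrArg Prod.fst h

lemma freshen_notMem_image {e : Ordinal.{u} → Ordinal.{u} → M} {β γ : Ordinal.{u}}
    (he : InjOn (e γ) (Iio γ)) (hγ : γ < β) : freshen e β γ ∉ freshen e γ '' Iio γ := by
  have fst_eq {δ : Ordinal.{u}} (hδ : δ < γ) : (freshen e γ δ).1 = e γ δ := by
    rw [freshen_apply e hδ]
  rintro ⟨δ, hδ, hδeq⟩
  by_cases hmem : (e β γ, false) ∈ freshen e γ '' Iio γ
  · obtain ⟨δ', hδ', hδ'eq⟩ := id hmem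
    have h₁ : e γ δ = e β γ := by
      simpa [fst_eq hδ, freshen_apply e hγ] using congrArg Prod.fst hδeq
    have h₂ : e γ δ' = e β γ := by simpa [fst_eq hδ'] using congrArg Prod.fst hδ'eq
    obtain rfl := he hδ hδ' (h₁.trans h₂.symm)
    rw [hδ'eq, freshen_apply e hγ, decide_eq_true hmem] at hδeq
    simp at hδeq
  · rw [freshen_apply e hγ, decide_eq_false hmem] at hδeq
    exact hmem ⟨δ, hδ, hδeq⟩

variable {V : Type*}

noncomputable def invBelow (F : Ordinal.{u} → Ordinal.{u} → V) (α : Ordinal.{u}) (v : V) :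
    Ordinal.{u} :=
  if h : v ∈ F α '' Iio α then h.choose else α

lemma invBelow_spec {F : Ordinal.{u} → Ordinal.{u} → V} {α : Ordinal.{u}} {v : V}
    (h : v ∈ F α '' Iio α) : invBelow F α v < α ∧ F α (invBelow F α v) = v := by
  rw [invBelow, dif_pos h]
  exact h.choose_spec

lemma invBelow_apply {F : Ordinal.{u} → Ordinal.{u} → V} {α γ : Ordinal.{u}}
    (hF : InjOn (F α) (Iio α)) (hγ : γ < α) : invBelow F α (F α γ) = γ :=
  have h := invBelow_spec (mem_image_of_mem (F α) (show γ ∈ Iio α from hγ))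
  hF h.1 hγ h.2

structure Code (V : Type*) where
  len : Ordinal.{u}
  entry : Ordinal.{u} → Ordinal.{u} → V

namespace Code

variable (F : Ordinal.{u} → Ordinal.{u} → V) (c : Code.{u} V)

noncomputable def elem (α i j : Ordinal.{u}) : Ordinal.{u} :=
  invBelow F α (c.entry i j)

def IsSlot (α i : Ordinal.{u}) (below : ∀ β < α, Set Ordinal.{u}) : Prop :=
  i < c.len ∧ StrictMonoOn (c.elem F α i) (Iio i) ∧
    ∀ j < i, c.entry i j ∈ F α '' Iio α ∧
      ∀ h : c.elem F α i j < α, below _ h = c.elem F α i '' Iio j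

noncomputable def below : Ordinal.{u} → Set Ordinal.{u} :=
  Ordinal.lt_wf.fix fun α below ↦
    if h : ∃ i, IsGreatest {i | c.IsSlot F α i below} i then c.elem F α h.choose '' Iio h.choose
    else ∅

lemma below_eq (α : Ordinal.{u}) : c.below F α =
    if h : ∃ i, IsGreatest {i | c.IsSlot F α i fun β _ ↦ c.below F β} i then
      c.elem F α h.choose '' Iio h.choose
    else ∅ :=
  Ordinal.lt_wf.fix_eq _ α

variable {F c}

lemma below_eq_of_isGreatest {α i : Ordinal.{u}}
    (h : IsGreatest {i | c.IsSlot F α i fun β _ ↦ c.below F β} i) :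
    c.below F α = c.elem F α i '' Iio i := by
  have hex : ∃ i, IsGreatest {i | c.IsSlot F α i fun β _ ↦ c.below F β} i := ⟨i, h⟩
  rw [below_eq, dif_pos hex, hex.choose_spec.unique h]

lemma below_eq_empty_or (α : Ordinal.{u}) : c.below F α = ∅ ∨
    ∃ i, c.IsSlot F α i (fun β _ ↦ c.below F β) ∧ c.below F α = c.elem F α i '' Iio i := by
  by_cases hex : ∃ i, IsGreatest {i | c.IsSlot F α i fun β _ ↦ c.below F β} i
  · obtain ⟨i, hi⟩ := hex
    exact Or.inr ⟨i, hi.1, below_eq_of_isGreatest hi⟩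
  · exact Or.inl (by rw [below_eq, dif_neg hex])

lemma below_subset_Iio (α : Ordinal.{u}) : c.below F α ⊆ Iio α := by
  obtain h | ⟨i, ⟨-, -, hslot⟩, h⟩ := below_eq_empty_or (F := F) (c := c) α
  · simp [h]
  · rw [h]
    rintro _ ⟨j, hj, rfl⟩
    exact (invBelow_spec (hslot j hj).1).1

lemma mk_below_le (α : Ordinal.{u}) : #(c.below F α) ≤ lift.{u + 1} c.len.card := by
  obtain h | ⟨i, ⟨hi, -⟩, h⟩ := below_eq_empty_or (F := F) (c := c) α
  · simp [h]
  · rw [h, ← mk_Iio_ordinal]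
    exact mk_image_le.trans (mk_le_mk_of_subset (Iio_subset_Iio hi.le))

lemma below_eq_inter_of_mem {α β : Ordinal.{u}} (hβ : β ∈ c.below F α) :
    c.below F β = c.below F α ∩ Iio β := by
  obtain h | ⟨i, ⟨-, hmono, hslot⟩, h⟩ := below_eq_empty_or (F := F) (c := c) α
  · simp [h] at hβ
  rw [h] at hβ ⊢
  obtain ⟨j, hj, rfl⟩ := hβ
  exact ((hslot j hj).2 (invBelow_spec (hslot j hj).1).1).trans
    (hmono.image_Iio_inter_Iio hj).symm

lemma below_eq_image_of_strictMono {e : Ordinal.{u} → Ordinal.{u}} (he : StrictMono e)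
    (hentry : ∀ i < c.len, ∀ j < i, c.entry i j = F (e i) (e j))
    (hinj : ∀ i < c.len, InjOn (F (e i)) (Iio (e i)))
    (hfresh : ∀ i < c.len, ∀ j < i, F (e i) (e j) ∉ F (e j) '' Iio (e j)) :
    ∀ i < c.len, c.below F (e i) = e '' Iio i := by
  intro i
  induction i using WellFoundedLT.induction with
  | _ i ih => ?_
  intro hi
  have helem : EqOn (c.elem F (e i) i) e (Iio i) := fun j hj ↦ by
    rw [elem, hentry i hi j hj, invBelow_apply (hinj i hi) (he hj)]
  have hslot : c.IsSlot F (e i) i fun β _ ↦ c.below F β := by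
    refine ⟨hi, (he.strictMonoOn _).congr helem.symm, fun j hj ↦ ⟨?_, fun _ ↦ ?_⟩⟩
    · rw [hentry i hi j hj]
      exact mem_image_of_mem _ (he hj)
    · change c.below F _ = _
      rw [helem hj, ih j hj (hj.trans hi), (helem.mono (Iio_subset_Iio hj.le)).image_eq]
  have hgreatest : i ∈ upperBounds {k | c.IsSlot F (e i) k fun β _ ↦ c.below F β} := by
    rintro i' ⟨hi', -, hslot'⟩
    by_contra! hii'
    exact hfresh i' hi' i hii' (hentry i' hi' i hii' ▸ (hslot' i hii').1)
  rw [below_eq_of_isGreatest ⟨hslot, hgreatest⟩, helem.image_eq]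

noncomputable def ofMatrix [Nonempty V] {δ : Ordinal.{u}} (g : Iio δ → Iio δ → V) : Code V where
  len := δ
  entry i j := if h : i < δ ∧ j < δ then g ⟨i, h.1⟩ ⟨j, h.2⟩ else Classical.arbitrary V

end Code

lemma mk_sigma_matrix_le {σ μ : Cardinal.{u}} {V : Type u} (hσ : ℵ₀ ≤ σ) (hσμ : σ ≤ μ)
    (hpow : μ ^< σ = μ) (hV : #V ≤ μ) :
    #(Σ δ : Iio σ.ord, (Iio δ.1 → Iio δ.1 → V)) ≤ lift.{u + 1} μ := by
  have hfiber (δ : Iio σ.ord) : #(Iio δ.1 → Iio δ.1 → V) ≤ lift.{u + 1} μ := by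
    have hδ : δ.1.card * δ.1.card < σ := mul_lt_of_lt hσ (lt_ord.1 δ.2) (lt_ord.1 δ.2)
    calc #(Iio δ.1 → Iio δ.1 → V) = lift.{u + 1} (#V ^ (δ.1.card * δ.1.card)) := by
          simp [mk_Iio_ordinal, power_mul]
      _ ≤ lift.{u + 1} (μ ^ (δ.1.card * δ.1.card)) := lift_le.2 (power_le_power_right hV)
      _ ≤ lift.{u + 1} μ := lift_le.2 ((le_powerlt μ hδ).trans_eq hpow)
  calc #(Σ δ : Iio σ.ord, (Iio δ.1 → Iio δ.1 → V))
      = sum fun δ : Iio σ.ord ↦ #(Iio δ.1 → Iio δ.1 → V) := mk_sigma _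
    _ ≤ sum fun _ : Iio σ.ord ↦ lift.{u + 1} μ := sum_le_sum _ _ hfiber
    _ = lift.{u + 1} (σ * μ) := by simp [mk_Iio_ordinal]
    _ = lift.{u + 1} μ := by rw [mul_eq_right (hσ.trans hσμ) hσμ (aleph0_pos.trans_le hσ).ne']

lemma exists_enum_codes {σ μ : Cardinal.{u}} {V : Type u} [Nonempty V] (hσ : ℵ₀ ≤ σ)
    (hσμ : σ ≤ μ) (hpow : μ ^< σ = μ) (hV : #V ≤ μ) :
    ∃ d : Ordinal.{u} → Code V, (∀ ε, (d ε).len < σ.ord) ∧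
      ∀ δ < σ.ord, ∀ g : Ordinal.{u} → Ordinal.{u} → V,
        ∃ ε < μ.ord, (d ε).len = δ ∧ ∀ i < δ, ∀ j < i, (d ε).entry i j = g i j := by
  have : Nonempty (Σ δ : Iio σ.ord, (Iio δ.1 → Iio δ.1 → V)) :=
    ⟨⟨⟨0, ord_pos.2 (aleph0_pos.trans_le hσ)⟩, fun _ _ ↦ Classical.arbitrary V⟩⟩
  obtain ⟨q, hq⟩ := exists_surjOn_univ_of_lift_mk_le
      (α := Σ δ : Iio σ.ord, (Iio δ.1 → Iio δ.1 → V)) (T := Iio μ.ord) (by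
    rw [mk_Iio_ordinal, card_ord, lift_id, lift_id]
    exact mk_sigma_matrix_le hσ hσμ hpow hV)
  refine ⟨fun ε ↦ Code.ofMatrix (q ε).2, fun ε ↦ (q ε).1.2, fun δ hδ g ↦ ?_⟩
  obtain ⟨ε, hε, hqε⟩ := hq (mem_univ ⟨⟨δ, hδ⟩, fun i j ↦ g i j⟩)
  refine ⟨ε, hε, ?_⟩
  dsimp only
  rw [hqε]
  exact ⟨rfl, fun i hi j hj ↦ by simp [Code.ofMatrix, hi, hj.trans hi]⟩

lemma exists_fresh_injOn {μ : Cardinal.{u}} (hμ : μ ≠ 0) :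
    ∃ F : Ordinal.{u} → Ordinal.{u} → μ.out × Bool,
      (∀ β < (Order.succ μ).ord, InjOn (F β) (Iio β)) ∧
        ∀ β < (Order.succ μ).ord, ∀ γ < β, F β γ ∉ F γ '' Iio γ := by
  have : Nonempty μ.out := mk_ne_zero_iff.1 (by rwa [mk_out])
  have (β : Ordinal.{u}) (hβ : β < (Order.succ μ).ord) :
      ∃ f : Ordinal.{u} → μ.out, InjOn f (Iio β) := by
    refine exists_injOn_iff_injective.2 ⟨_, (lift_mk_le'.1 ?_).some.injective⟩
    rw [mk_Iio_ordinal, mk_out, lift_id'.{u, u + 1}]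
    exact lift_le.2 (Order.lt_succ_iff.1 (lt_ord.1 hβ))
  choose! f hf using this
  exact ⟨freshen f, fun β hβ ↦ injOn_freshen (hf β hβ),
    fun β hβ γ hγ ↦ freshen_notMem_image (hf γ (hγ.trans hβ)) hγ⟩

end CoherentArray

open CoherentArray

theorem stmt_8_general (σ μ : Cardinal.{u}) (hσ : ℵ₀ ≤ σ) (hσμ : σ ≤ μ)
    (hpow : μ ^< σ = μ) :
    ∃ U : Ordinal.{u} → Ordinal.{u} → Set Ordinal.{u},
      (∀ α < (Order.succ μ).ord, ∀ ε < μ.ord,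
        U α ε ⊆ Set.Iio α ∧ #↥(U α ε) < Cardinal.lift.{u + 1} σ) ∧
      (∀ α < (Order.succ μ).ord, ∀ ε < μ.ord, ∀ β ∈ U α ε,
        U β ε = U α ε ∩ Set.Iio β) ∧
      (∀ s : Set Ordinal.{u}, s ⊆ Set.Iio (Order.succ μ).ord →
        #↥s < Cardinal.lift.{u + 1} σ →
        ∃ ε < μ.ord, ∀ β ∈ s, s ∩ Set.Iio β ⊆ U β ε) := by
  have hμ : ℵ₀ ≤ μ := hσ.trans hσμ
  obtain ⟨F, hinj, hfresh⟩ := exists_fresh_injOn (aleph0_pos.trans_le hμ).ne'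
  have : Nonempty (μ.out × Bool) := ⟨F 0 0⟩
  have hV : #(μ.out × Bool) ≤ μ := by
    simpa using (mul_eq_left hμ ((natCast_lt_aleph0 (n := 2)).le.trans hμ) two_ne_zero).le
  obtain ⟨d, hlen, hd⟩ := exists_enum_codes hσ hσμ hpow hV
  refine ⟨fun α ε ↦ (d ε).below F α, fun α _ ε _ ↦ ⟨Code.below_subset_Iio α,
    (Code.mk_below_le α).trans_lt (lift_lt.2 (lt_ord.1 (hlen ε)))⟩,
    fun α _ ε _ β hβ ↦ Code.below_eq_inter_of_mem hβ, fun s hs hcard ↦ ?_⟩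
  obtain ⟨e, he, δ, rfl⟩ := Ordinal.exists_strictMono_image_Iio_eq (bddAbove_Iio.mono hs)
  have hδ : δ < σ.ord := by
    rw [mk_image_eq_of_injOn _ _ he.injective.injOn, mk_Iio_ordinal, lift_lt] at hcard
    exact lt_ord.2 hcard
  obtain ⟨ε, hε, rfl, hentry⟩ := hd δ hδ fun i j ↦ F (e i) (e j)
  have hlt (i : Ordinal.{u}) (hi : i < (d ε).len) : e i < (Order.succ μ).ord := hs ⟨i, hi, rfl⟩
  refine ⟨ε, hε, ?_⟩
  rintro _ ⟨i, hi, rfl⟩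
  rw [(he.strictMonoOn _).image_Iio_inter_Iio hi]
  exact (Code.below_eq_image_of_strictMono he hentry (fun i hi ↦ hinj _ (hlt i hi))
    (fun i hi j hj ↦ hfresh _ (hlt i hi) _ (he hj)) i hi).ge

/-- For `σ ≤ μ` with `σ` regular and `μ^{<σ} = μ`, there is a coherent array
`⟨u^α_ε : ε < μ, α < μ⁺⟩` of sets in `[α]^{<σ}` covering all sets in `[μ⁺]^{<σ}`. -/
theorem stmt_8 (σ μ : Cardinal.{u}) (hσ : ℵ₀ ≤ σ) (hσμ : σ ≤ μ)
    (hreg : σ.IsRegular) (hpow : μ ^< σ = μ) :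
    ∃ U : Ordinal.{u} → Ordinal.{u} → Set Ordinal.{u},
      (∀ α < (Order.succ μ).ord, ∀ ε < μ.ord,
        U α ε ⊆ Set.Iio α ∧ #↥(U α ε) < Cardinal.lift.{u + 1} σ) ∧
      (∀ α < (Order.succ μ).ord, ∀ ε < μ.ord, ∀ β ∈ U α ε,
        U β ε = U α ε ∩ Set.Iio β) ∧
      (∀ s : Set Ordinal.{u}, s ⊆ Set.Iio (Order.succ μ).ord →
        #↥s < Cardinal.lift.{u + 1} σ →
        ∃ ε < μ.ord, ∀ β ∈ s, s ∩ Set.Iio β ⊆ U β ε) :=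
  stmt_8_general σ μ hσ hσμ hpow
end

section
/- Let μ be an infinite cardinal, λ = μ⁺, and F₁, F₂ : λ × λ → λ functions such that for all α with μ ≤ α < λ: F₁(α, β) < μ for all β < α, and F₂(α, F₁(α, β)) = β for all β < α. Suppose w, v ⊆ λ are both closed under the partial operations (α, β) ↦ F₁(α, β) and (α, ξ) ↦ F₂(α, ξ) (for arguments lying in the set), and suppose w ∩ μ = v ∩ μ. Then w ∩ v is an initial segment of w in the following sense: whenever β < α, α ∈ w ∩ v, and β ∈ w, it follows that β ∈ v. -/
open Cardinal

universe u

/-- Treeness: if `w, v ⊆ λ = μ⁺` are closed under the coding functions `F₁, F₂` and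
agree below `μ`, then `w ∩ v` is an initial segment of `w`. -/
theorem stmt_17 (μ : Cardinal.{u}) (hμ : ℵ₀ ≤ μ)
    (F₁ F₂ : Ordinal.{u} → Ordinal.{u} → Ordinal.{u})
    (hF₁ : ∀ α, μ.ord ≤ α → α < (Order.succ μ).ord → ∀ β < α, F₁ α β < μ.ord)
    (hF₂ : ∀ α, μ.ord ≤ α → α < (Order.succ μ).ord → ∀ β < α, F₂ α (F₁ α β) = β)
    (w v : Set Ordinal.{u})
    (hw : w ⊆ Set.Iio (Order.succ μ).ord) (hv : v ⊆ Set.Iio (Order.succ μ).ord)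
    (hwc : ∀ α ∈ w, ∀ β ∈ w, F₁ α β ∈ w ∧ F₂ α β ∈ w)
    (hvc : ∀ α ∈ v, ∀ β ∈ v, F₁ α β ∈ v ∧ F₂ α β ∈ v)
    (heq : w ∩ Set.Iio μ.ord = v ∩ Set.Iio μ.ord) :
    ∀ α β : Ordinal.{u}, α ∈ w → α ∈ v → β ∈ w → β < α → β ∈ v := by
  intro α β hαw hαv hβw hβα
  by_cases hβμ : β < μ.ord
  · have h : β ∈ w ∩ Set.Iio μ.ord := ⟨hβw, hβμ⟩
    rw [heq] at h
    exact h.1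
  · push_neg at hβμ
    have hμα : μ.ord ≤ α := le_of_lt (lt_of_le_of_lt hβμ hβα)
    have hαlt : α < (Order.succ μ).ord := hw hαw
    have h1 : F₁ α β ∈ w := (hwc α hαw β hβw).1
    have h1lt : F₁ α β < μ.ord := hF₁ α hμα hαlt β hβα
    have h1v : F₁ α β ∈ v := by
      have : F₁ α β ∈ w ∩ Set.Iio μ.ord := ⟨h1, h1lt⟩
      rw [heq] at this
      exact this.1
    have := (hvc α hαv (F₁ α β) h1v).2
    rwa [hF₂ α hμα hαlt β hβα] at this
end
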